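/- Let K be a field, let R = K[x,y,z,w], and consider the 2×6 matrix β over R with rows (w, z, x^2, 0, x^6, y^6) and (z, x, w^2, w^5, y^6, 0), and the 6×2 matrix α over R with rows (y^6 − x·z·w^4, −x^2·w^4), (x·w^5 − x^3·z·w^2, y^6 − x^4·w^2), (x^4·z + x·z^2·w^2, x^5 + x^2·z·w^2 + w^5), (−x^2, −w^2), (−z, −x), (−w, −z). Then: (i) β·α = 0 as a matrix over R; (ii) for every point p = (x,y,z,w) ∈ K^4 with p ≠ 0, the evaluated matrix β(p) : K^6 → K^2 is surjective (i.e., has rank 2); (iii) for every point p ∈ K^4 with p ≠ 0, the evaluated matrix α(p) : K^2 → K^6 is injective (i.e., has rank 2). -/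

import Mathlib

open MvPolynomial

/-- The matrix `β` of the monad for the spectrum `X_10^10`, with variables
`x = X 0`, `y = X 1`, `z = X 2`, `w = X 3`. -/
noncomputable def betaX10 (K : Type*) [Field K] :
    Matrix (Fin 2) (Fin 6) (MvPolynomial (Fin 4) K) :=
  let x : MvPolynomial (Fin 4) K := X 0
  let y : MvPolynomial (Fin 4) K := X 1
  let z : MvPolynomial (Fin 4) K := X 2
  let w : MvPolynomial (Fin 4) K := X 3
  !![w, z, x ^ 2, 0, x ^ 6, y ^ 6;
     z, x, w ^ 2, w ^ 5, y ^ 6, 0]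

/-- The matrix `α` of the monad for the spectrum `X_10^10`. -/
noncomputable def alphaX10 (K : Type*) [Field K] :
    Matrix (Fin 6) (Fin 2) (MvPolynomial (Fin 4) K) :=
  let x : MvPolynomial (Fin 4) K := X 0
  let y : MvPolynomial (Fin 4) K := X 1
  let z : MvPolynomial (Fin 4) K := X 2
  let w : MvPolynomial (Fin 4) K := X 3
  !![y ^ 6 - x * z * w ^ 4, -(x ^ 2 * w ^ 4);
     x * w ^ 5 - x ^ 3 * z * w ^ 2, y ^ 6 - x ^ 4 * w ^ 2;
     x ^ 4 * z + x * z ^ 2 * w ^ 2, x ^ 5 + x ^ 2 * z * w ^ 2 + w ^ 5;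
     -(x ^ 2), -(w ^ 2);
     -z, -x;
     -w, -z]

/-! The identity `β * α = 0` is checked entry by entry. For the rank conditions it suffices to
exhibit, at each point `p = (x, y, z, w) ≠ 0`, a nonvanishing `2 × 2` minor. For `β` the column
minors `(0,3)`, `(0,1)`, `(1,2)`, `(4,5)` are `w⁶`, `xw - z²`, `zw² - x³`, `-y¹²`, which settle in
turn the cases `w ≠ 0`; `z ≠ 0`; `x ≠ 0`; `y ≠ 0`. For `α`, if `w ≠ 0` then either the row minor
`(4,5) = z² - xw` is nonzero, or `z² = xw` and the minor `(2,5) = w⁶ - (x⁴ + xzw²)(z² - xw)`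
equals `w⁶`; if `w = 0`, the minors `(0,1)`, `(3,4)`, `(4,5)` reduce to `y¹²`, `x³`, `z²`. -/

namespace Matrix

variable {m n : Type*} [Fintype m] [DecidableEq m]

theorem mulVecLin_surjective_of_isUnit_det_submatrix {R : Type*} [CommRing R] [Fintype n]
    [DecidableEq n] (M : Matrix m n R) (e : m → n) (h : IsUnit (M.submatrix id e).det) :
    Function.Surjective M.mulVecLin := by
  intro v
  obtain ⟨u, hu⟩ := mulVec_surjective_iff_isUnit.mpr ((isUnit_iff_isUnit_det _).mpr h) v
  refine ⟨(1 : Matrix n n R).submatrix (Equiv.refl n) e *ᵥ u, ?_⟩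
  rw [mulVecLin_apply, mulVec_mulVec, mul_submatrix_one]
  exact hu

theorem mulVecLin_injective_of_isUnit_det_submatrix {K : Type*} [Field K] (A : Matrix n m K)
    (e : m → n) (h : IsUnit (A.submatrix e id).det) : Function.Injective A.mulVecLin := by
  intro u v huv
  apply mulVec_injective_iff_isUnit.mpr ((isUnit_iff_isUnit_det _).mpr h)
  change (A *ᵥ u) ∘ e = (A *ᵥ v) ∘ e
  rw [← mulVecLin_apply, ← mulVecLin_apply, huv]

variable {K : Type*} [Field K]

theorem mulVecLin_surjective_of_minor_ne_zero [Fintype n] [DecidableEq n]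
    (M : Matrix (Fin 2) n K) (i j : n) (h : M 0 i * M 1 j - M 0 j * M 1 i ≠ 0) :
    Function.Surjective M.mulVecLin :=
  M.mulVecLin_surjective_of_isUnit_det_submatrix ![i, j] (by rw [det_fin_two]; simpa using h)

theorem mulVecLin_injective_of_minor_ne_zero (A : Matrix n (Fin 2) K) (i j : n)
    (h : A i 0 * A j 1 - A i 1 * A j 0 ≠ 0) : Function.Injective A.mulVecLin :=
  A.mulVecLin_injective_of_isUnit_det_submatrix ![i, j] (by rw [det_fin_two]; simpa using h)

end Matrix

section

variable {K : Type*} [Field K]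

theorem betaX10_mul_alphaX10 : betaX10 K * alphaX10 K = 0 := by
  refine Matrix.ext fun i j => ?_
  fin_cases i <;> fin_cases j <;>
    · simp [betaX10, alphaX10, Matrix.mul_apply, Fin.sum_univ_succ]
      ring

theorem betaX10_map_eval_surjective {p : Fin 4 → K} (hp : p ≠ 0) :
    Function.Surjective ((betaX10 K).map (eval p)).mulVecLin := by
  rcases ne_or_eq (p 3) 0 with hw | hw
  · exact Matrix.mulVecLin_surjective_of_minor_ne_zero _ 0 3 (by simp [betaX10, hw])
  rcases ne_or_eq (p 2) 0 with hz | hz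
  · exact Matrix.mulVecLin_surjective_of_minor_ne_zero _ 0 1 (by simp [betaX10, hw, hz])
  rcases ne_or_eq (p 0) 0 with hx | hx
  · exact Matrix.mulVecLin_surjective_of_minor_ne_zero _ 1 2 (by simp [betaX10, hw, hz, hx])
  have hy : p 1 ≠ 0 := fun hy => hp (funext fun k => by fin_cases k <;> assumption)
  exact Matrix.mulVecLin_surjective_of_minor_ne_zero _ 4 5 (by simp [betaX10, hy])

theorem alphaX10_map_eval_injective {p : Fin 4 → K} (hp : p ≠ 0) :
    Function.Injective ((alphaX10 K).map (eval p)).mulVecLin := by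
  rcases ne_or_eq (p 3) 0 with hw | hw
  · rcases ne_or_eq (p 2 * p 2 - p 0 * p 3) 0 with hq | hq
    · exact Matrix.mulVecLin_injective_of_minor_ne_zero _ 4 5 (by simpa [alphaX10] using hq)
    · refine Matrix.mulVecLin_injective_of_minor_ne_zero _ 2 5 ?_
      intro h
      refine pow_ne_zero 6 hw ?_
      simp only [alphaX10, Matrix.map_apply, Matrix.of_apply, Matrix.cons_val', Matrix.cons_val_zero,
        Matrix.cons_val_fin_one, Matrix.cons_val, Matrix.cons_val_one, map_add, map_mul, map_pow,
        eval_X, map_neg, mul_neg, sub_neg_eq_add] at h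
      linear_combination h + (p 0 ^ 4 + p 0 * p 2 * p 3 ^ 2) * hq
  rcases ne_or_eq (p 1) 0 with hy | hy
  · exact Matrix.mulVecLin_injective_of_minor_ne_zero _ 0 1 (by simp [alphaX10, hw, hy])
  rcases ne_or_eq (p 0) 0 with hx | hx
  · exact Matrix.mulVecLin_injective_of_minor_ne_zero _ 3 4 (by simp [alphaX10, hw, hx])
  have hz : p 2 ≠ 0 := fun hz => hp (funext fun k => by fin_cases k <;> assumption)
  exact Matrix.mulVecLin_injective_of_minor_ne_zero _ 4 5 (by simp [alphaX10, hw, hz])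

end

/-- `β ∘ α = 0`, `β` is pointwise surjective and `α` is pointwise injective away from the
origin: these data define the positive minimal Horrocks monad with `b = (2,2,1)`,
`a = (3,3)`. -/
theorem stmt_19 (K : Type*) [Field K] :
    betaX10 K * alphaX10 K = 0 ∧
    (∀ p : Fin 4 → K, p ≠ 0 →
      Function.Surjective (Matrix.mulVecLin ((betaX10 K).map (MvPolynomial.eval p)))) ∧
    (∀ p : Fin 4 → K, p ≠ 0 →
      Function.Injective (Matrix.mulVecLin ((alphaX10 K).map (MvPolynomial.eval p)))) :=
  ⟨betaX10_mul_alphaX10, fun _ => betaX10_map_eval_surjective,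
    fun _ => alphaX10_map_eval_injective⟩
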